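/- arXiv:2510.01613 — 8 statements merged into one kernel-verified Lean document; each statement's English description precedes it below -/
import Mathlib

section
/- Let p(z) = z^n + a_{n-1}z^{n-1} + ... + a_0 be a monic complex polynomial factoring as ∏_{i=1}^r (z - λ_i)^{m_i} with distinct roots λ_i. For any δ with 0 < δ < (1/2)·min_{i≠j}|λ_i - λ_j|, there exists ε > 0 such that every monic polynomial q(z) = z^n + b_{n-1}z^{n-1} + ... + b_0 with max_k |a_k - b_k| < ε has exactly m_i roots counted with multiplicity in the open disk of radius δ around λ_i, for each i. -/
/-!
A compactness argument replaces Rouché's theorem. If no `ε` worked, there would be monic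
polynomials `Q k = ∏ j, (X - C (f k j))` of degree `n` whose coefficients tend to those of
`p = ∏ i, (X - C (lam i)) ^ m i`, each with a wrong root count near some `lam i`. Cauchy's bound
keeps the root vectors `f k` in a fixed ball of `Fin n → ℂ`, so they have a cluster point `g`;
evaluating pointwise gives `p = ∏ j, (X - C (g j))`. For the infinitely many `k` with
`‖f k - g‖ < δ`, every root of `Q k` lies within `δ` of a root of `p`, and since the `lam i` are
`2δ`-separated, the disk around `lam i` contains exactly the `m i` roots of `Q k` that shadow the
copies of `lam i` among the `g j`.
-/

open Polynomial Filter Topology NNReal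

theorem Multiset.exists_eq_map_univ_fin {α : Type*} {s : Multiset α} {n : ℕ}
    (hs : Multiset.card s = n) : ∃ f : Fin n → α, s = Finset.univ.val.map f := by
  rcases s with ⟨l⟩
  obtain rfl : l.length = n := hs
  exact ⟨l.get, by rw [Fin.univ_val_map, List.ofFn_get]; rfl⟩

theorem Multiset.card_filter_norm_sub_lt_map_eq_count_map {ι E : Type*}
    [SeminormedAddCommGroup E] [DecidableEq E] (s : Multiset ι) {f g : ι → E} {δ : ℝ} {c : E}
    (hfg : ∀ j ∈ s, ‖f j - g j‖ < δ) (hg : ∀ j ∈ s, g j = c ∨ 2 * δ < ‖g j - c‖) :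
    ((s.map f).filter (fun z => ‖z - c‖ < δ)).card = (s.map g).count c := by
  rw [Multiset.filter_map, Multiset.card_map, Multiset.count_map]
  refine congrArg _ (Multiset.filter_congr fun j hj => ?_)
  rcases hg j hj with hgc | hfar
  · simp only [Function.comp_apply, ← hgc, hfg j hj, eq_self]
  · have : ‖g j - c‖ ≤ ‖f j - g j‖ + ‖f j - c‖ := by
      simpa [norm_sub_rev] using norm_sub_le_norm_sub_add_norm_sub (g j) (f j) c
    refine iff_of_false (fun hfc => ?_) fun hcg => ?_
    · linarith [hfg j hj, show ‖f j - c‖ < δ from hfc]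
    · rw [← hcg, sub_self, norm_zero] at hfar
      linarith [(norm_nonneg _).trans_lt (hfg j hj)]

namespace Polynomial

section CommRing

variable {R ι : Type*} [CommRing R]

theorem Monic.coeff_eq_coeff_of_natDegree_le [Nontrivial R] {p q : R[X]} (hp : p.Monic)
    (hq : q.Monic) (h : p.natDegree = q.natDegree) {t : ℕ} (ht : p.natDegree ≤ t) :
    p.coeff t = q.coeff t := by
  rcases ht.eq_or_lt with rfl | ht
  · rw [hp.coeff_natDegree, h, hq.coeff_natDegree]
  · rw [coeff_eq_zero_of_natDegree_lt ht, coeff_eq_zero_of_natDegree_lt (h ▸ ht)]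

variable [IsDomain R]

theorem roots_finsetProd_X_sub_C (s : Finset ι) (f : ι → R) :
    (∏ j ∈ s, (X - C (f j))).roots = s.val.map f := by
  rw [roots_prod _ _ (monic_prod_of_monic _ _ fun j _ => monic_X_sub_C (f j)).ne_zero]
  simp only [roots_X_sub_C, Multiset.bind_singleton]

theorem roots_finsetProd_X_sub_C_pow (s : Finset ι) (f : ι → R) (m : ι → ℕ) :
    (∏ j ∈ s, (X - C (f j)) ^ m j).roots = ∑ j ∈ s, m j • {f j} := by
  rw [roots_prod _ _ (monic_prod_of_monic _ _ fun j _ => (monic_X_sub_C _).pow _).ne_zero]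
  simp only [roots_pow, roots_X_sub_C, Multiset.bind, Multiset.join, Finset.sum_eq_multiset_sum]

theorem exists_eq_of_mem_roots_finsetProd_X_sub_C_pow {s : Finset ι} {f : ι → R} {m : ι → ℕ}
    {z : R} (hz : z ∈ (∏ j ∈ s, (X - C (f j)) ^ m j).roots) : ∃ j ∈ s, z = f j := by
  rw [roots_finsetProd_X_sub_C_pow, Multiset.mem_sum] at hz
  obtain ⟨j, hj, hz⟩ := hz
  exact ⟨j, hj, Multiset.mem_singleton.1 (Multiset.mem_of_mem_nsmul hz)⟩

theorem count_roots_prod_X_sub_C_pow [Fintype ι] [DecidableEq R] {f : ι → R}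
    (hf : Function.Injective f) (m : ι → ℕ) (i : ι) :
    (∏ j, (X - C (f j)) ^ m j).roots.count (f i) = m i := by
  rw [roots_finsetProd_X_sub_C_pow, Multiset.count_sum', Finset.sum_eq_single i]
  · simp
  · intro j _ hji
    simp [hf.ne hji.symm]
  · simp

end CommRing

theorem exists_eq_prod_X_sub_C {K : Type*} [Field K] [IsAlgClosed K] {q : K[X]} (hq : q.Monic)
    {n : ℕ} (hn : q.natDegree = n) : ∃ f : Fin n → K, q = ∏ j, (X - C (f j)) := by
  obtain ⟨f, hf⟩ := Multiset.exists_eq_map_univ_fin (IsAlgClosed.card_roots_eq_natDegree.trans hn)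
  refine ⟨f, ?_⟩
  rw [(IsAlgClosed.splits q).eq_prod_roots_of_monic hq, hf, Multiset.map_map]
  rfl

theorem Monic.nnnorm_lt_of_isRoot_of_coeff_le {K : Type*} [NormedDivisionRing K] {q : K[X]}
    (hq : q.Monic) {B : ℝ≥0} (hB : ∀ t < q.natDegree, ‖q.coeff t‖₊ ≤ B) {z : K} (hz : q.IsRoot z) :
    ‖z‖₊ < B + 1 := by
  refine (hz.norm_lt_cauchyBound hq.ne_zero).trans_le ?_
  rw [cauchyBound, hq.leadingCoeff, nnnorm_one, div_one]
  gcongr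
  exact Finset.sup_le fun t ht => hB t (Finset.mem_range.1 ht)

theorem tendsto_eval_of_tendsto_coeff {R ι : Type*} [Semiring R] [TopologicalSpace R]
    [IsTopologicalSemiring R] {l : Filter ι} {Q : ι → R[X]} {p : R[X]} {n : ℕ}
    (hQ : ∀ k, (Q k).natDegree ≤ n) (hp : p.natDegree ≤ n)
    (h : ∀ t, Tendsto (fun k => (Q k).coeff t) l (𝓝 (p.coeff t))) (x : R) :
    Tendsto (fun k => (Q k).eval x) l (𝓝 (p.eval x)) := by
  simp only [fun k => eval_eq_sum_range' (Nat.lt_succ_of_le (hQ k)) x,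
    eval_eq_sum_range' (Nat.lt_succ_of_le hp)]
  exact tendsto_finsetSum _ fun t _ => (h t).mul_const _

theorem eventually_norm_le_of_tendsto_coeff {K ι : Type*} [NormedField K] {l : Filter ι} {n : ℕ}
    {f : ι → Fin n → K} {p : K[X]}
    (hcoeff : ∀ t, Tendsto (fun k => (∏ j, (X - C (f k j))).coeff t) l (𝓝 (p.coeff t))) :
    ∃ R, ∀ᶠ k in l, ‖f k‖ ≤ R := by
  set B : ℝ≥0 := (Finset.range n).sup fun t => ‖p.coeff t‖₊ + 1
  have hcoeff_lt : ∀ᶠ k in l, ∀ t ∈ Finset.range n,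
      ‖(∏ j, (X - C (f k j))).coeff t‖₊ < ‖p.coeff t‖₊ + 1 :=
    (eventually_all_finset _).2 fun t _ => (hcoeff t).nnnorm.eventually_lt_const (lt_add_one _)
  refine ⟨B + 1, hcoeff_lt.mono fun k hk => ?_⟩
  have hmonic : (∏ j, (X - C (f k j))).Monic :=
    monic_prod_of_monic _ _ fun j _ => monic_X_sub_C (f k j)
  have hdeg : (∏ j, (X - C (f k j))).natDegree = n := by simp
  refine (pi_norm_le_iff_of_nonneg (by positivity)).2 fun j =>
    (NNReal.coe_lt_coe.2 <| hmonic.nnnorm_lt_of_isRoot_of_coeff_le (fun t ht => ?_) ?_).le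
  · rw [hdeg, ← Finset.mem_range] at ht
    exact (hk t ht).le.trans (Finset.le_sup (f := fun t => ‖p.coeff t‖₊ + 1) ht)
  · simp [IsRoot, eval_prod, Finset.prod_eq_zero (Finset.mem_univ j)]

theorem exists_mapClusterPt_of_tendsto_coeff {p : ℂ[X]} {n : ℕ}
    (hp : p.natDegree ≤ n) {f : ℕ → Fin n → ℂ}
    (hcoeff : ∀ t, Tendsto (fun k => (∏ j, (X - C (f k j))).coeff t) atTop (𝓝 (p.coeff t))) :
    ∃ g : Fin n → ℂ, p = ∏ j, (X - C (g j)) ∧ MapClusterPt g atTop f := by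
  obtain ⟨R, hR⟩ := eventually_norm_le_of_tendsto_coeff hcoeff
  obtain ⟨g, -, hg⟩ := (isCompact_closedBall (0 : Fin n → ℂ) R).exists_mapClusterPt_of_frequently
    (hR.mono fun k hk => mem_closedBall_zero_iff.2 hk).frequently
  refine ⟨g, Polynomial.funext fun z => ?_, hg⟩
  have hlim := tendsto_eval_of_tendsto_coeff (fun k => by simp) hp hcoeff z
  have hcluster : MapClusterPt ((∏ j, (X - C (g j))).eval z) atTop
      (fun k => (∏ j, (X - C (f k j))).eval z) := by
    have hcont : Continuous fun v : Fin n → ℂ => ∏ j, (z - v j) := by fun_prop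
    simp only [eval_prod, eval_sub, eval_X, eval_C]
    exact hg.tendsto_comp (f := fun v : Fin n → ℂ => ∏ j, (z - v j)) (hcont.tendsto g)
  exact (eq_of_nhds_neBot (hcluster.clusterPt.mono hlim)).symm

theorem frequently_card_roots_filter_eq_count {p : ℂ[X]} {n : ℕ} (hp : p.natDegree ≤ n)
    {Q : ℕ → ℂ[X]} (hQ : ∀ k, (Q k).Monic) (hQn : ∀ k, (Q k).natDegree = n)
    (hcoeff : ∀ t, Tendsto (fun k => (Q k).coeff t) atTop (𝓝 (p.coeff t))) {δ : ℝ} (hδ : 0 < δ) :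
    ∃ᶠ k in atTop, ∀ c : ℂ, (∀ z ∈ p.roots, z = c ∨ 2 * δ < ‖z - c‖) →
      ((Q k).roots.filter (fun z => ‖z - c‖ < δ)).card = p.roots.count c := by
  choose f hf using fun k => exists_eq_prod_X_sub_C (hQ k) (hQn k)
  simp only [hf] at hcoeff ⊢
  obtain ⟨g, hpg, hg⟩ := exists_mapClusterPt_of_tendsto_coeff hp hcoeff
  refine (hg.frequently (Metric.ball_mem_nhds g hδ)).mono fun k hk c hc => ?_
  rw [dist_pi_lt_iff hδ] at hk
  simp only [dist_eq_norm] at hk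
  simp only [hpg, roots_finsetProd_X_sub_C] at hc ⊢
  exact Multiset.card_filter_norm_sub_lt_map_eq_count_map _ (fun j _ => hk j)
    fun j hj => hc _ (Multiset.mem_map_of_mem _ hj)

end Polynomial

open Polynomial in
open scoped Classical in
theorem stmt2_general (n r : ℕ) (lam : Fin r → ℂ)
    (hlam : Function.Injective lam) (m : Fin r → ℕ) (hm : ∑ i, m i = n)
    (δ : ℝ) (hδ0 : 0 < δ)
    (hδ : ∀ i j : Fin r, i ≠ j → 2 * δ < ‖lam i - lam j‖) :
    ∃ ε > 0, ∀ q : Polynomial ℂ, q.Monic → q.natDegree = n →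
      (∀ k < n,
        ‖(∏ i : Fin r, (X - C (lam i)) ^ m i).coeff k - q.coeff k‖ < ε) →
      ∀ i : Fin r,
        (q.roots.filter (fun z => ‖z - lam i‖ < δ)).card = m i := by
  set p := ∏ i : Fin r, (X - C (lam i)) ^ m i
  have hpmonic : p.Monic := monic_prod_of_monic _ _ fun i _ => (monic_X_sub_C _).pow _
  have hpn : p.natDegree = n := by
    rw [← hm, natDegree_prod_of_monic _ _ fun i _ => (monic_X_sub_C _).pow _]
    simp
  by_contra! hcon
  choose Q hQ hQn hQc i hi using fun k : ℕ => hcon (1 / (k + 1)) Nat.one_div_pos_of_nat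
  have hcoeff (t : ℕ) : Tendsto (fun k => (Q k).coeff t) atTop (𝓝 (p.coeff t)) := by
    rcases lt_or_ge t n with ht | ht
    · rw [tendsto_iff_norm_sub_tendsto_zero]
      refine squeeze_zero (fun _ => norm_nonneg _) (fun k => ?_)
        tendsto_one_div_add_atTop_nhds_zero_nat
      rw [norm_sub_rev]
      exact (hQc k t ht).le
    · exact tendsto_const_nhds.congr fun k =>
        hpmonic.coeff_eq_coeff_of_natDegree_le (hQ k) (hpn.trans (hQn k).symm) (hpn ▸ ht)
  obtain ⟨k, hk⟩ := (frequently_card_roots_filter_eq_count hpn.le hQ hQn hcoeff hδ0).exists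
  refine hi k ((hk _ fun z hz => ?_).trans (count_roots_prod_X_sub_C_pow hlam m (i k)))
  obtain ⟨i', -, rfl⟩ := exists_eq_of_mem_roots_finsetProd_X_sub_C_pow hz
  rcases eq_or_ne i' (i k) with rfl | hne
  · exact .inl rfl
  · exact .inr (hδ _ _ hne)

open Polynomial in
open scoped Classical in
/-- Continuous dependence of roots (via Rouché): if
`p = ∏ᵢ (z - λᵢ)^{mᵢ}` has distinct roots `λᵢ` and `0 < δ < (1/2) minᵢ≠ⱼ |λᵢ - λⱼ|`,
then there is `ε > 0` such that every monic polynomial `q` of degree `n` whose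
coefficients are within `ε` of those of `p` has exactly `mᵢ` roots (with
multiplicity) in the open disk of radius `δ` around `λᵢ`, for each `i`. -/
theorem stmt2 (n r : ℕ) (hn : 0 < n) (lam : Fin r → ℂ)
    (hlam : Function.Injective lam) (m : Fin r → ℕ) (hm : ∑ i, m i = n)
    (δ : ℝ) (hδ0 : 0 < δ)
    (hδ : ∀ i j : Fin r, i ≠ j → 2 * δ < ‖lam i - lam j‖) :
    ∃ ε > 0, ∀ q : Polynomial ℂ, q.Monic → q.natDegree = n →
      (∀ k < n,
        ‖(∏ i : Fin r, (X - C (lam i)) ^ m i).coeff k - q.coeff k‖ < ε) →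
      ∀ i : Fin r,
        (q.roots.filter (fun z => ‖z - lam i‖ < δ)).card = m i :=
  stmt2_general n r lam hlam m hm δ hδ0 hδ
end

section
/- Let X be a compact Hausdorff space and P a monic polynomial of degree n over C(X). For every δ > 0 there exists ε > 0 such that every ε-approximate root f ∈ C(X) of P satisfies d(f(x), σ_{P(x,·)}) < δ for all x ∈ X, where σ_{P(x,·)} is the set of roots of the complex polynomial P(x,z) and d denotes the minimum distance from a point to this finite set. -/
/-!
If `P(x, ·)` is monic with roots `z₁, …, zₙ` (with multiplicity), then
`|P(x, w)| = ∏ |w - zᵢ|`. So if `w` is at distance at least `δ` from every root, then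
`|P(x, w)| ≥ δ ^ n`; hence `ε = δ ^ n` works, uniformly in `x` and `f`.
-/

open Polynomial

namespace Polynomial

section NormedField

variable {K : Type*} [NormedField K] {p : K[X]}

theorem Splits.norm_eval_eq_prod_norm_sub_roots (hs : p.Splits) (hm : p.Monic) (w : K) :
    ‖p.eval w‖ = (p.roots.map fun z => ‖w - z‖).prod := by
  rw [hs.eval_eq_prod_roots_of_monic hm]
  exact (p.roots.prod_hom' (normHom : K →*₀ ℝ) (w - ·)).symm

theorem Splits.exists_mem_roots_norm_sub_lt (hs : p.Splits) (hm : p.Monic) {w : K} {δ : ℝ}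
    (hδ : 0 ≤ δ) (h : ‖p.eval w‖ < δ ^ p.natDegree) : ∃ z ∈ p.roots, ‖w - z‖ < δ := by
  by_contra! hfar
  have hprod := Multiset.prod_map_le_prod_map₀ (fun _ => δ) (fun z => ‖w - z‖)
    (fun _ _ => hδ) hfar
  rw [Multiset.map_const', Multiset.prod_replicate, ← hs.natDegree_eq_card_roots,
    ← hs.norm_eval_eq_prod_norm_sub_roots hm] at hprod
  exact hprod.not_gt h

end NormedField

section MonicOfCoeffs

variable {R : Type*} [Semiring R] {n : ℕ}

theorem monic_X_pow_add_sum_fin (c : Fin n → R) :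
    (X ^ n + ∑ i : Fin n, C (c i) * X ^ (i : ℕ)).Monic :=
  monic_X_pow_add (degree_sum_fin_lt c)

theorem natDegree_X_pow_add_sum_fin [Nontrivial R] (c : Fin n → R) :
    (X ^ n + ∑ i : Fin n, C (c i) * X ^ (i : ℕ)).natDegree = n := by
  rw [natDegree_add_eq_left_of_degree_lt (by simpa using degree_sum_fin_lt c), natDegree_X_pow]

theorem eval_X_pow_add_sum_fin (c : Fin n → R) (w : R) :
    (X ^ n + ∑ i : Fin n, C (c i) * X ^ (i : ℕ)).eval w =
      w ^ n + ∑ i : Fin n, c i * w ^ (i : ℕ) := by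
  simp [eval_finsetSum, eval_X_pow]

end MonicOfCoeffs

end Polynomial

theorem stmt3_general {X : Type*} [TopologicalSpace X]
    (n : ℕ) (a : Fin n → C(X, ℂ)) (δ : ℝ) (hδ : 0 < δ) :
    ∃ ε > 0, ∀ f : C(X, ℂ),
      (∀ x : X, ‖(f x) ^ n + ∑ i : Fin n, a i x * (f x) ^ (i : ℕ)‖ < ε) →
      ∀ x : X, ∃ z : ℂ,
        z ^ n + ∑ i : Fin n, a i x * z ^ (i : ℕ) = 0 ∧ ‖f x - z‖ < δ := by
  refine ⟨δ ^ n, pow_pos hδ n, fun f hf x => ?_⟩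
  set q : ℂ[X] := Polynomial.X ^ n + ∑ i : Fin n, C (a i x) * Polynomial.X ^ (i : ℕ)
  have hsmall : ‖q.eval (f x)‖ < δ ^ q.natDegree := by
    rw [natDegree_X_pow_add_sum_fin, eval_X_pow_add_sum_fin]
    exact hf x
  obtain ⟨z, hz, hclose⟩ :=
    (IsAlgClosed.splits q).exists_mem_roots_norm_sub_lt (monic_X_pow_add_sum_fin _) hδ.le hsmall
  refine ⟨z, ?_, hclose⟩
  rw [← eval_X_pow_add_sum_fin]
  exact isRoot_of_mem_roots hz

/-- Approximate roots are uniformly close to the roots: for a monic polynomial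
`P(x,z) = z^n + ∑ aᵢ(x) zⁱ` over `C(X)` and every `δ > 0` there is `ε > 0` such
that every `ε`-approximate root `f` satisfies `d(f(x), σ_{P(x,·)}) < δ` for all
`x`, i.e. `f(x)` is within `δ` of some root of `P(x,·)`. -/
theorem stmt3 {X : Type*} [TopologicalSpace X] [CompactSpace X] [T2Space X]
    (n : ℕ) (hn : 0 < n) (a : Fin n → C(X, ℂ)) (δ : ℝ) (hδ : 0 < δ) :
    ∃ ε > 0, ∀ f : C(X, ℂ),
      (∀ x : X, ‖(f x) ^ n + ∑ i : Fin n, a i x * (f x) ^ (i : ℕ)‖ < ε) →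
      ∀ x : X, ∃ z : ℂ,
        z ^ n + ∑ i : Fin n, a i x * z ^ (i : ℕ) = 0 ∧ ‖f x - z‖ < δ :=
  stmt3_general n a δ hδ
end

section
/- Let X be a compact Hausdorff space and P a monic polynomial over C(X) such that for every x ∈ X the complex polynomial P(x,z) has no repeated roots. If P has ε-approximate roots for every ε > 0, then P has an exact root, i.e. there exists f ∈ C(X) with P(x, f(x)) = 0 for all x ∈ X. -/
open Finset Metric

lemma my_aux1 (t : ℂ) (k : ℕ) : ∑ j ∈ Finset.range k, t^j * t^(k-1-j) = (k:ℂ) * t^(k-1) := by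
  have h : ∀ j ∈ Finset.range k, t^j * t^(k-1-j) = t^(k-1) := fun j hj => by
    rw [← pow_add]; congr 1; have := Finset.mem_range.mp hj; omega
  rw [Finset.sum_congr rfl h, Finset.sum_const, Finset.card_range, nsmul_eq_mul]

lemma my_aux2 {B : ℝ} (hB : 1 ≤ B) {z t : ℂ} (hz : ‖z‖ ≤ B) (ht : ‖t‖ ≤ B) {j n : ℕ} (hj : j ≤ n) :
    ‖z^j - t^j‖ ≤ (n:ℝ) * B^n * ‖z - t‖ := by
  have hB0 : (0:ℝ) ≤ B := le_trans zero_le_one hB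
  rw [← geom_sum₂_mul z t j, norm_mul]
  have hsum : ‖∑ i ∈ Finset.range j, z^i * t^(j-1-i)‖ ≤ (n:ℝ) * B^n := by
    refine (norm_sum_le _ _).trans ?_
    calc ∑ i ∈ Finset.range j, ‖z^i * t^(j-1-i)‖ ≤ ∑ _i ∈ Finset.range j, B^n := by
          refine Finset.sum_le_sum fun i hi => ?_
          rw [norm_mul, norm_pow, norm_pow]
          calc ‖z‖^i * ‖t‖^(j-1-i) ≤ B^i * B^(j-1-i) := by gcongr
            _ = B^(i+(j-1-i)) := (pow_add _ _ _).symm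
            _ ≤ B^n := pow_le_pow_right₀ hB (by have := Finset.mem_range.mp hi; omega)
      _ = j * B^n := by rw [Finset.sum_const, Finset.card_range, nsmul_eq_mul]
      _ ≤ n * B^n := mul_le_mul_of_nonneg_right (Nat.cast_le.mpr hj) (by positivity)
  exact mul_le_mul_of_nonneg_right hsum (norm_nonneg _)

lemma my_aux3 {B : ℝ} (hB : 1 ≤ B) {z w t : ℂ} (hz : ‖z‖ ≤ B) (hw : ‖w‖ ≤ B) (ht : ‖t‖ ≤ B)
    {k n : ℕ} (hk : k ≤ n) :
    ‖(∑ j ∈ Finset.range k, z^j * w^(k-1-j)) - (k:ℂ) * t^(k-1)‖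
      ≤ (n:ℝ) * ((n:ℝ) * B^n * B^n) * (‖z - t‖ + ‖w - t‖) := by
  have hB0 : (0:ℝ) ≤ B := le_trans zero_le_one hB
  rw [← my_aux1 t k, ← Finset.sum_sub_distrib]
  refine (norm_sum_le _ _).trans ?_
  have hterm : ∀ j ∈ Finset.range k, ‖z^j * w^(k-1-j) - t^j * t^(k-1-j)‖
      ≤ (n:ℝ) * B^n * B^n * (‖z - t‖ + ‖w - t‖) := by
    intro j hj
    have hjn : j ≤ n := (Finset.mem_range.mp hj).le.trans hk
    have hmn : k - 1 - j ≤ n := by omega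
    have key : z^j * w^(k-1-j) - t^j * t^(k-1-j)
        = (z^j - t^j) * w^(k-1-j) + t^j * (w^(k-1-j) - t^(k-1-j)) := by ring
    rw [key]
    refine (norm_add_le _ _).trans ?_
    rw [norm_mul, norm_mul, norm_pow, norm_pow]
    have h1 : ‖z^j - t^j‖ * ‖w‖^(k-1-j) ≤ ((n:ℝ) * B^n * ‖z - t‖) * B^n := by
      gcongr
      · exact my_aux2 hB hz ht hjn
      · exact (pow_le_pow_left₀ (norm_nonneg w) hw _).trans (pow_le_pow_right₀ hB hmn)
    have h2 : ‖t‖^j * ‖w^(k-1-j) - t^(k-1-j)‖ ≤ B^n * ((n:ℝ) * B^n * ‖w - t‖) := by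
      gcongr
      · exact (pow_le_pow_left₀ (norm_nonneg t) ht _).trans (pow_le_pow_right₀ hB hjn)
      · exact my_aux2 hB hw ht hmn
    calc _ ≤ ((n:ℝ) * B^n * ‖z - t‖) * B^n + B^n * ((n:ℝ) * B^n * ‖w - t‖) := add_le_add h1 h2
      _ = (n:ℝ) * B^n * B^n * (‖z - t‖ + ‖w - t‖) := by ring
  calc (∑ j ∈ Finset.range k, ‖z^j * w^(k-1-j) - t^j * t^(k-1-j)‖)
      ≤ ∑ _j ∈ Finset.range k, (n:ℝ) * B^n * B^n * (‖z - t‖ + ‖w - t‖) := Finset.sum_le_sum hterm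
    _ = (k:ℝ) * ((n:ℝ) * B^n * B^n * (‖z - t‖ + ‖w - t‖)) := by
        rw [Finset.sum_const, Finset.card_range, nsmul_eq_mul]
    _ ≤ (n:ℝ) * ((n:ℝ) * B^n * B^n * (‖z - t‖ + ‖w - t‖)) := by
        refine mul_le_mul_of_nonneg_right (Nat.cast_le.mpr hk) (by positivity)
    _ = (n:ℝ) * ((n:ℝ) * B^n * B^n) * (‖z - t‖ + ‖w - t‖) := by ring

lemma my_aux4 {B : ℝ} (hB : 1 ≤ B) {z w t : ℂ} (hz : ‖z‖ ≤ B) (hw : ‖w‖ ≤ B) (ht : ‖t‖ ≤ B)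
    {k n : ℕ} (hk : k ≤ n) :
    ‖z^k - w^k - (k:ℂ)*t^(k-1)*(z-w)‖ ≤ (n:ℝ)*((n:ℝ)*B^n*B^n)*((‖z-t‖+‖w-t‖)*‖z-w‖) := by
  have hid : z^k - w^k - (k:ℂ)*t^(k-1)*(z-w)
      = ((∑ j ∈ Finset.range k, z^j*w^(k-1-j)) - (k:ℂ)*t^(k-1))*(z-w) := by
    rw [sub_mul, geom_sum₂_mul]
  rw [hid, norm_mul]
  calc ‖(∑ j ∈ Finset.range k, z^j*w^(k-1-j)) - (k:ℂ)*t^(k-1)‖ * ‖z-w‖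
      ≤ ((n:ℝ)*((n:ℝ)*B^n*B^n)*(‖z-t‖+‖w-t‖)) * ‖z-w‖ :=
        mul_le_mul_of_nonneg_right (my_aux3 hB hz hw ht hk) (norm_nonneg _)
    _ = (n:ℝ)*((n:ℝ)*B^n*B^n)*((‖z-t‖+‖w-t‖)*‖z-w‖) := by ring

lemma my_key (n : ℕ) (b : Fin n → ℂ) {B : ℝ} (hB : 1 ≤ B) (hb : ∀ i, ‖b i‖ ≤ B)
    {z w t : ℂ} (hz : ‖z‖ ≤ B) (hw : ‖w‖ ≤ B) (ht : ‖t‖ ≤ B) :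
    ‖(z^n + ∑ i : Fin n, b i * z^(i:ℕ)) - (w^n + ∑ i : Fin n, b i * w^(i:ℕ))
      - ((n:ℂ)*t^(n-1) + ∑ i : Fin n, b i * ((i:ℂ) * t^((i:ℕ)-1)))*(z-w)‖
    ≤ ((1+(n:ℝ)*B) * ((n:ℝ)*((n:ℝ)*B^n*B^n))) * ((‖z-t‖+‖w-t‖)*‖z-w‖) := by
  have hB0 : (0:ℝ) ≤ B := le_trans zero_le_one hB
  have hsplit : (z^n + ∑ i : Fin n, b i * z^(i:ℕ)) - (w^n + ∑ i : Fin n, b i * w^(i:ℕ))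
      - ((n:ℂ)*t^(n-1) + ∑ i : Fin n, b i * ((i:ℂ) * t^((i:ℕ)-1)))*(z-w)
      = (z^n - w^n - (n:ℂ)*t^(n-1)*(z-w))
        + ∑ i : Fin n, b i * (z^(i:ℕ) - w^(i:ℕ) - (i:ℂ)*t^((i:ℕ)-1)*(z-w)) := by
    conv_rhs => rw [Finset.sum_congr rfl (fun i _ => by ring :
      ∀ i ∈ (Finset.univ : Finset (Fin n)),
        b i * (z^(i:ℕ) - w^(i:ℕ) - (i:ℂ)*t^((i:ℕ)-1)*(z-w))
        = b i * z^(i:ℕ) - b i * w^(i:ℕ) - b i * ((i:ℂ) * t^((i:ℕ)-1)) * (z-w))]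
    rw [Finset.sum_sub_distrib, Finset.sum_sub_distrib, ← Finset.sum_mul]
    ring
  rw [hsplit]
  set D : ℝ := (n:ℝ)*((n:ℝ)*B^n*B^n)*((‖z-t‖+‖w-t‖)*‖z-w‖) with hD
  have hD0 : 0 ≤ D := by positivity
  have h1 : ‖z^n - w^n - (n:ℂ)*t^(n-1)*(z-w)‖ ≤ D := my_aux4 hB hz hw ht le_rfl
  have h2 : ∀ i : Fin n, ‖b i * (z^(i:ℕ) - w^(i:ℕ) - (i:ℂ)*t^((i:ℕ)-1)*(z-w))‖ ≤ B * D := by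
    intro i
    rw [norm_mul]
    exact mul_le_mul (hb i) (my_aux4 hB hz hw ht (le_of_lt i.isLt)) (norm_nonneg _) hB0
  calc ‖_ + _‖ ≤ D + ∑ _i : Fin n, B * D := by
        refine (norm_add_le _ _).trans (add_le_add h1 ((norm_sum_le _ _).trans
          (Finset.sum_le_sum fun i _ => h2 i)))
    _ = D + (n:ℝ) * (B * D) := by
        rw [Finset.sum_const, Finset.card_univ, Fintype.card_fin, nsmul_eq_mul]
    _ = ((1+(n:ℝ)*B) * ((n:ℝ)*((n:ℝ)*B^n*B^n))) * ((‖z-t‖+‖w-t‖)*‖z-w‖) := by rw [hD]; ring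

lemma my_big (n : ℕ) (hn : 0 < n) (b : Fin n → ℂ) (z : ℂ)
    (h : (∑ i : Fin n, ‖b i‖) + 2 ≤ ‖z‖) : 1 ≤ ‖z^n + ∑ i : Fin n, b i * z^(i:ℕ)‖ := by
  set S := ∑ i : Fin n, ‖b i‖ with hS
  have hS0 : 0 ≤ S := Finset.sum_nonneg fun i _ => norm_nonneg _
  have hr1 : (1:ℝ) ≤ ‖z‖ := by linarith
  have hsum : ‖∑ i : Fin n, b i * z^(i:ℕ)‖ ≤ S * ‖z‖^(n-1) := by
    refine (norm_sum_le _ _).trans ?_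
    rw [hS, Finset.sum_mul]
    refine Finset.sum_le_sum fun i _ => ?_
    rw [norm_mul, norm_pow]
    exact mul_le_mul_of_nonneg_left
      (pow_le_pow_right₀ hr1 (by have := i.isLt; omega)) (norm_nonneg _)
  have hpow : (1:ℝ) ≤ ‖z‖^(n-1) := one_le_pow₀ hr1
  have hrn : ‖z‖^n = ‖z‖^(n-1) * ‖z‖ := by
    rw [← pow_succ]; congr 1; omega
  have htri : ‖z‖^n - ‖∑ i : Fin n, b i * z^(i:ℕ)‖ ≤ ‖z^n + ∑ i : Fin n, b i * z^(i:ℕ)‖ := by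
    have h1 := norm_add_le (z^n + ∑ i : Fin n, b i * z^(i:ℕ)) (-(∑ i : Fin n, b i * z^(i:ℕ)))
    simp only [add_neg_cancel_right, norm_neg, norm_pow] at h1
    linarith
  have hmul : (1:ℝ)*2 ≤ ‖z‖^(n-1) * (‖z‖ - S) := by
    refine mul_le_mul hpow (by linarith) (by norm_num) (by positivity)
  have hexp : ‖z‖^(n-1) * (‖z‖ - S) = ‖z‖^n - S * ‖z‖^(n-1) := by rw [hrn]; ring
  linarith

lemma my_evalp (n : ℕ) (b : Fin n → ℂ) (z : ℂ) :
    (Polynomial.X ^ n + ∑ i : Fin n, Polynomial.C (b i) * Polynomial.X ^ (i : ℕ) :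
      Polynomial ℂ).eval z = z^n + ∑ i : Fin n, b i * z^(i:ℕ) := by
  simp [Polynomial.eval_finset_sum]

lemma my_evald (n : ℕ) (b : Fin n → ℂ) (z : ℂ) :
    (Polynomial.X ^ n + ∑ i : Fin n, Polynomial.C (b i) * Polynomial.X ^ (i : ℕ) :
      Polynomial ℂ).derivative.eval z
    = (n:ℂ) * z^(n-1) + ∑ i : Fin n, b i * ((i:ℂ) * z^((i:ℕ)-1)) := by
  simp [Polynomial.derivative_X_pow, Polynomial.derivative_C_mul, Polynomial.eval_finset_sum]

set_option maxHeartbeats 1000000 in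
/-- Stability for polynomials with no repeated roots: if the monic polynomial
`P(x,z) = z^n + ∑ aᵢ(x) zⁱ` over `C(Y)` is separable (no repeated roots) at each
point `x`, and `P` has `ε`-approximate roots for every `ε > 0`, then `P` has an
exact continuous root. -/
theorem stmt4 {Y : Type*} [TopologicalSpace Y] [CompactSpace Y] [T2Space Y]
    (n : ℕ) (hn : 0 < n) (a : Fin n → C(Y, ℂ))
    (hsep : ∀ x : Y,
      (Polynomial.X ^ n + ∑ i : Fin n, Polynomial.C (a i x) * Polynomial.X ^ (i : ℕ) :
        Polynomial ℂ).Separable)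
    (happrox : ∀ ε > 0, ∃ f : C(Y, ℂ),
      ∀ x : Y, ‖(f x) ^ n + ∑ i : Fin n, a i x * (f x) ^ (i : ℕ)‖ < ε) :
    ∃ f : C(Y, ℂ), ∀ x : Y, (f x) ^ n + ∑ i : Fin n, a i x * (f x) ^ (i : ℕ) = 0 := by
  obtain he | ⟨⟨x₀⟩⟩ := isEmpty_or_nonempty Y
  · exact ⟨0, fun x => (he.false x).elim⟩
  -- constants
  set S : ℝ := ∑ i : Fin n, ‖a i‖ with hS
  have hS0 : 0 ≤ S := Finset.sum_nonneg fun i _ => norm_nonneg _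
  set R : ℝ := S + 2 with hR
  have hR0 : (0:ℝ) ≤ R := by positivity
  set B : ℝ := R + 1 with hB
  have hB1 : (1:ℝ) ≤ B := by simp [hB]; linarith
  have hB0 : (0:ℝ) ≤ B := by linarith
  have haB : ∀ (i : Fin n) (x : Y), ‖a i x‖ ≤ B := by
    intro i x
    calc ‖a i x‖ ≤ ‖a i‖ := (a i).norm_coe_le_norm x
      _ ≤ S := Finset.single_le_sum (f := fun i : Fin n => ‖a i‖)
          (fun j _ => norm_nonneg _) (Finset.mem_univ i)
      _ ≤ B := by rw [hB, hR]; linarith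
  -- the function φ and its minimum δ
  set φ : Y × ℂ → ℝ := fun q =>
    ‖q.2^n + ∑ i : Fin n, a i q.1 * q.2^(i:ℕ)‖
    + ‖(n:ℂ)*q.2^(n-1) + ∑ i : Fin n, a i q.1 * ((i:ℂ) * q.2^((i:ℕ)-1))‖ with hφ
  have hφcont : Continuous φ := by
    refine Continuous.add (Continuous.norm ?_) (Continuous.norm ?_)
    · exact (continuous_snd.pow n).add (continuous_finset_sum _ fun i _ =>
        ((a i).continuous.comp continuous_fst).mul (continuous_snd.pow _))
    · exact (continuous_const.mul (continuous_snd.pow _)).add (continuous_finset_sum _ fun i _ =>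
        ((a i).continuous.comp continuous_fst).mul (continuous_const.mul (continuous_snd.pow _)))
  have hφpos : ∀ q : Y × ℂ, 0 < φ q := by
    rintro ⟨x, z⟩
    have hnn : 0 ≤ φ (x, z) := add_nonneg (norm_nonneg _) (norm_nonneg _)
    rcases hnn.lt_or_eq with h | h
    · exact h
    exfalso
    have h1 : ‖z^n + ∑ i : Fin n, a i x * z^(i:ℕ)‖ = 0 := by
      have := norm_nonneg ((n:ℂ)*z^(n-1) + ∑ i : Fin n, a i x * ((i:ℂ) * z^((i:ℕ)-1)))
      have := norm_nonneg (z^n + ∑ i : Fin n, a i x * z^(i:ℕ))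
      simp only [hφ] at h
      linarith
    have h2 : ‖(n:ℂ)*z^(n-1) + ∑ i : Fin n, a i x * ((i:ℂ) * z^((i:ℕ)-1))‖ = 0 := by
      have := norm_nonneg (z^n + ∑ i : Fin n, a i x * z^(i:ℕ))
      simp only [hφ] at h
      linarith
    obtain ⟨A', B', hAB⟩ := hsep x
    have hcontr := congrArg (Polynomial.eval z) hAB
    rw [norm_eq_zero] at h1 h2
    simp only [Polynomial.eval_add, Polynomial.eval_mul, Polynomial.eval_one,
      my_evalp n (fun i => a i x) z, my_evald n (fun i => a i x) z, h1, h2,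
      mul_zero, add_zero] at hcontr
    exact one_ne_zero hcontr.symm
  obtain ⟨q₀, hq₀K, hq₀min⟩ :=
    (isCompact_univ.prod (isCompact_closedBall (0:ℂ) B)).exists_isMinOn
      ⟨(x₀, 0), by simp [Set.mem_prod, hB0]⟩ hφcont.continuousOn
  set δ : ℝ := φ q₀ with hδ
  have hδpos : 0 < δ := hφpos q₀
  have hδmin : ∀ x : Y, ∀ z : ℂ, ‖z‖ ≤ B → δ ≤ φ (x, z) := by
    intro x z hz
    refine isMinOn_iff.mp hq₀min (x, z) ?_
    simp only [Set.mem_prod, Set.mem_univ, true_and, Metric.mem_closedBall, dist_zero_right]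
    exact hz
  have hδmin' : ∀ (x : Y) (z : ℂ), ‖z‖ ≤ B →
      δ ≤ ‖z^n + ∑ i : Fin n, a i x * z^(i:ℕ)‖
        + ‖(n:ℂ)*z^(n-1) + ∑ i : Fin n, a i x * ((i:ℂ)*z^((i:ℕ)-1))‖ := hδmin
  clear_value δ
  clear hδmin hq₀min hφpos hφcont hδ
  clear_value S R B
  -- more constants
  set K : ℝ := (1+(n:ℝ)*B) * ((n:ℝ)*((n:ℝ)*B^n*B^n)) with hK
  have hK0 : 0 ≤ K := by positivity
  set r : ℝ := min 1 (δ/(8*(K+1))) with hr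
  have hr0 : 0 < r := lt_min one_pos (by positivity)
  have hr1 : r ≤ 1 := min_le_left _ _
  have hrK : 2*K*r ≤ δ/4 := by
    have h1 : r ≤ δ/(8*(K+1)) := min_le_right _ _
    have h2 : 2*K*r ≤ 2*K*(δ/(8*(K+1))) := by
      exact mul_le_mul_of_nonneg_left h1 (by positivity)
    have h3 : 2*K*(δ/(8*(K+1))) ≤ δ/4 :=
      calc 2*K*(δ/(8*(K+1))) = δ * (K/(K+1)) / 4 := by field_simp; ring
        _ ≤ δ * 1 / 4 := by gcongr; exact div_le_one_of_le₀ (by linarith) (by positivity)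
        _ = δ/4 := by ring
    linarith
  clear_value K r
  set ε : ℝ := min 1 (min (δ/2) (δ*r/8)) with hε
  have hεpos : 0 < ε := lt_min one_pos (lt_min (by positivity) (by positivity))
  have hε1 : ε ≤ 1 := min_le_left _ _
  have hεδ2 : ε ≤ δ/2 := le_trans (min_le_right _ _) (min_le_left _ _)
  have hεδr : ε ≤ δ*r/8 := le_trans (min_le_right _ _) (min_le_right _ _)
  clear_value ε
  obtain ⟨g, hg⟩ := happrox ε hεpos
  -- bound on g
  have hgR : ∀ x : Y, ‖g x‖ ≤ R := by
    intro x
    by_contra hcon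
    push_neg at hcon
    have hsx : ∑ i : Fin n, ‖a i x‖ ≤ S := by
      rw [hS]
      exact Finset.sum_le_sum fun i _ => (a i).norm_coe_le_norm x
    have hbig : (∑ i : Fin n, ‖a i x‖) + 2 ≤ ‖g x‖ := by
      rw [hR] at hcon; linarith
    have h1 : (1:ℝ) ≤ ‖(g x)^n + ∑ i : Fin n, a i x * (g x)^(i:ℕ)‖ :=
      my_big n hn (fun i => a i x) (g x) hbig
    have h2 := hg x
    linarith
  have hgB : ∀ x, ‖g x‖ ≤ B := fun x => (hgR x).trans (by rw [hB]; linarith)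
  -- the derivative at g, as a continuous map
  have hucont : Continuous fun x : Y =>
      (n:ℂ)*(g x)^(n-1) + ∑ i : Fin n, a i x * ((i:ℂ)*(g x)^((i:ℕ)-1)) :=
    (continuous_const.mul (g.continuous.pow _)).add (continuous_finset_sum _ fun i _ =>
      (a i).continuous.mul (continuous_const.mul (g.continuous.pow _)))
  set u : C(Y,ℂ) := ⟨_, hucont⟩ with hu
  have hu_apply : ∀ x, u x
      = (n:ℂ)*(g x)^(n-1) + ∑ i : Fin n, a i x * ((i:ℂ)*(g x)^((i:ℕ)-1)) := fun x => rfl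
  have hu_low : ∀ x, δ/2 ≤ ‖u x‖ := by
    intro x
    have h1 := hδmin' x (g x) (hgB x)
    rw [← hu_apply x] at h1
    have h2 := hg x
    linarith
  have hu_ne : ∀ x, u x ≠ 0 := by
    intro x h0
    have := hu_low x
    rw [h0, norm_zero] at this
    linarith
  set v : C(Y,ℂ) := ⟨fun x => (u x)⁻¹, u.continuous.inv₀ hu_ne⟩ with hv
  have hv_apply : ∀ x, v x = (u x)⁻¹ := fun x => rfl
  have hvu : v * u = 1 := by
    ext x
    simp only [ContinuousMap.mul_apply, ContinuousMap.one_apply, hv_apply]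
    exact inv_mul_cancel₀ (hu_ne x)
  have huv : u * v = 1 := by
    ext x
    simp only [ContinuousMap.mul_apply, ContinuousMap.one_apply, hv_apply]
    exact mul_inv_cancel₀ (hu_ne x)
  have hvnorm : ‖v‖ ≤ 2/δ := by
    refine (ContinuousMap.norm_le v (by positivity)).2 fun x => ?_
    rw [hv_apply, norm_inv]
    rw [inv_le_comm₀ (lt_of_lt_of_le (by positivity) (hu_low x)) (by positivity)]
    rw [inv_div]
    exact hu_low x
  -- the map F
  set F : C(Y,ℂ) → C(Y,ℂ) := fun w => w^n + ∑ i : Fin n, a i * w^(i:ℕ) with hF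
  have hF_apply : ∀ (w : C(Y,ℂ)) (x : Y),
      F w x = (w x)^n + ∑ i : Fin n, a i x * (w x)^(i:ℕ) := fun w x => by
    rw [hF]; simp
  -- linear equivalence: multiplication by u
  let e : C(Y,ℂ) ≃L[ℂ] C(Y,ℂ) :=
    { toFun := fun w => u * w
      map_add' := mul_add u
      map_smul' := fun c w => mul_smul_comm c u w
      invFun := fun w => v * w
      left_inv := fun w => by
        show v * (u * w) = w
        rw [← mul_assoc, hvu, one_mul]
      right_inv := fun w => by
        show u * (v * w) = w
        rw [← mul_assoc, huv, one_mul]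
      continuous_toFun := continuous_const.mul continuous_id
      continuous_invFun := continuous_const.mul continuous_id }
  have hecoe : ∀ w, (e : C(Y,ℂ) →L[ℂ] C(Y,ℂ)) w = u * w := fun w => rfl
  have hesymm : ∀ w, (e.symm : C(Y,ℂ) →L[ℂ] C(Y,ℂ)) w = v * w := fun w => rfl
  set nri := e.toNonlinearRightInverse with hnri
  have hN : (nri.nnnorm : ℝ) = ‖(e.symm : C(Y,ℂ) →L[ℂ] C(Y,ℂ))‖ := rfl
  have hNle : (nri.nnnorm : ℝ) ≤ 2/δ := by
    rw [hN]
    refine ContinuousLinearMap.opNorm_le_bound _ (by positivity) fun w => ?_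
    rw [hesymm]
    exact (norm_mul_le v w).trans (mul_le_mul_of_nonneg_right hvnorm (norm_nonneg w))
  haveI : Nonempty Y := ⟨x₀⟩
  have hNpos : 0 < (nri.nnnorm : ℝ) := by
    have h1 : ‖v x₀‖ ≤ ‖v‖ := v.norm_coe_le_norm x₀
    have h2 : 0 < ‖v x₀‖ := by
      rw [norm_pos_iff]
      rw [hv_apply]
      exact inv_ne_zero (hu_ne x₀)
    have h3 : ‖v‖ ≤ (nri.nnnorm : ℝ) := by
      have h4 := (e.symm : C(Y,ℂ) →L[ℂ] C(Y,ℂ)).le_opNorm (1 : C(Y,ℂ))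
      rw [hesymm, mul_one, norm_one, mul_one] at h4
      rw [hN]
      exact h4
    linarith
  have hNinv : δ/2 ≤ ((nri.nnnorm : ℝ))⁻¹ := by
    have h1 := one_div_le_one_div_of_le hNpos hNle
    rw [one_div, one_div, inv_div] at h1
    exact h1
  -- ApproximatesLinearOn
  have hδ4 : (0:ℝ) ≤ δ/4 := by positivity
  set cnn : NNReal := ⟨δ/4, hδ4⟩ with hcnn
  have hcoe : (cnn : ℝ) = δ/4 := rfl
  clear_value cnn
  have hdiff : ∀ w : C(Y,ℂ), ‖w - g‖ ≤ r → ∀ x, ‖w x - g x‖ ≤ r := by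
    intro w hw x
    calc ‖w x - g x‖ = ‖(w - g) x‖ := by simp
      _ ≤ ‖w - g‖ := (w - g).norm_coe_le_norm x
      _ ≤ r := hw
  have hballB : ∀ w : C(Y,ℂ), ‖w - g‖ ≤ r → ∀ x, ‖w x‖ ≤ B := by
    intro w hw x
    calc ‖w x‖ = ‖g x + (w x - g x)‖ := by ring_nf
      _ ≤ ‖g x‖ + ‖w x - g x‖ := norm_add_le _ _
      _ ≤ R + 1 := add_le_add (hgR x) ((hdiff w hw x).trans hr1)
      _ = B := hB.symm
  have hAL : ApproximatesLinearOn F (e : C(Y,ℂ) →L[ℂ] C(Y,ℂ)) (closedBall g r) cnn := by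
    intro u' hu' v' hv'
    rw [hecoe]
    have hu'g : ‖u' - g‖ ≤ r := by rwa [← dist_eq_norm, ← Metric.mem_closedBall]
    have hv'g : ‖v' - g‖ ≤ r := by rwa [← dist_eq_norm, ← Metric.mem_closedBall]
    refine (ContinuousMap.norm_le _ (by positivity)).2 fun x => ?_
    have hpt : (F u' - F v' - u * (u' - v')) x
        = ((u' x)^n + ∑ i : Fin n, a i x * (u' x)^(i:ℕ))
          - ((v' x)^n + ∑ i : Fin n, a i x * (v' x)^(i:ℕ))
          - ((n:ℂ)*(g x)^(n-1) + ∑ i : Fin n, a i x * ((i:ℂ)*(g x)^((i:ℕ)-1))) * (u' x - v' x) := by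
      simp [hF_apply, hu_apply]
    rw [hpt]
    have hkey := my_key n (fun i => a i x) hB1 (fun i => haB i x)
      (hballB u' hu'g x) (hballB v' hv'g x) (hgB x)
    refine hkey.trans ?_
    have hzw : ‖u' x - v' x‖ ≤ ‖u' - v'‖ := by
      calc ‖u' x - v' x‖ = ‖(u' - v') x‖ := by simp
        _ ≤ ‖u' - v'‖ := (u' - v').norm_coe_le_norm x
    rw [← hK]
    calc K * ((‖u' x - g x‖ + ‖v' x - g x‖) * ‖u' x - v' x‖)
        ≤ K * ((r + r) * ‖u' - v'‖) := by
          refine mul_le_mul_of_nonneg_left ?_ hK0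
          exact mul_le_mul (add_le_add (hdiff u' hu'g x) (hdiff v' hv'g x)) hzw
            (norm_nonneg _) (by positivity)
      _ = (2*K*r) * ‖u' - v'‖ := by ring
      _ ≤ (δ/4) * ‖u' - v'‖ := mul_le_mul_of_nonneg_right hrK (norm_nonneg _)
      _ = (cnn : ℝ) * ‖u' - v'‖ := by rw [hcoe]
  -- conclude by local surjectivity
  have h0mem : (0:C(Y,ℂ)) ∈ closedBall (F g) ((((nri.nnnorm : ℝ))⁻¹ - (cnn:ℝ)) * r) := by
    have hFg : ‖F g‖ ≤ ε := (ContinuousMap.norm_le _ hεpos.le).2 fun x => by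
      rw [hF_apply]; exact (hg x).le
    rw [Metric.mem_closedBall, dist_zero_left, hcoe]
    have h5 := mul_le_mul_of_nonneg_right hNinv hr0.le
    have h6 : (((nri.nnnorm : ℝ))⁻¹ - δ/4)*r = ((nri.nnnorm : ℝ))⁻¹*r - δ/4*r := by ring
    rw [h6]
    linarith
  obtain ⟨f, hfmem, hf0⟩ :=
    hAL.surjOn_closedBall_of_nonlinearRightInverse nri hr0.le (fun q hq => hq) h0mem
  refine ⟨f, fun x => ?_⟩
  have h1 : F f x = (0:C(Y,ℂ)) x := by rw [hf0]
  rw [hF_apply] at h1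
  simpa using h1
end

section
/- Let X be a compact, locally connected Hausdorff space and P a monic polynomial over C(X). If for every ε > 0 there exists an ε-approximate root of P, then P has an exact root in C(X). -/
open Polynomial Metric Set Filter Topology MeasureTheory

/-!
The value of a split monic polynomial at `v` is the product of the distances from `v` to its
roots, so an approximate root is close to an exact one. Near `x₀`, an `η`-approximate root `f`
therefore maps a connected neighbourhood of `x₀` into the union of the `r`-balls around the at most
`d` roots of `P x₀`, and a connected set covered by `d` balls of radius `r` has diameter at most
`2rd`. Hence a sequence of `1/k`-approximate roots is equicontinuous; it is also uniformly bounded,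
so it has a pointwise cluster point (taken along an ultrafilter, in place of an Arzelà–Ascoli
subsequence), which is continuous and an exact root.
-/

theorem Polynomial.exists_mem_roots_dist_lt_of_norm_eval_lt {K : Type*} [NormedField K]
    {p : K[X]} (hm : p.Monic) (hs : p.Splits) {r : ℝ} (hr : 0 ≤ r) {v : K}
    (hv : ‖p.eval v‖ < r ^ p.natDegree) : ∃ w ∈ p.roots, dist v w < r := by
  by_contra! h
  have hprod : ‖p.eval v‖ = (p.roots.map fun w => ‖v - w‖).prod := by
    rw [hs.eval_eq_prod_roots_of_monic hm]
    exact (Multiset.prod_hom' p.roots (normHom : K →*₀ ℝ) (v - ·)).symm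
  have := Multiset.prod_map_le_prod_map₀ (fun _ => r) (fun w => ‖v - w‖) (fun _ _ => hr)
    (fun w hw => (dist_eq_norm v w) ▸ h w hw)
  rw [Multiset.map_const', Multiset.prod_replicate, ← hs.natDegree_eq_card_roots, ← hprod] at this
  exact this.not_gt hv

theorem IsPreconnected.dist_le_of_subset_biUnion_ball {α : Type*} [PseudoMetricSpace α]
    {C : Set α} (hC : IsPreconnected C) {S : Finset α} {r : ℝ} (hr : 0 ≤ r)
    (hCS : C ⊆ ⋃ s ∈ S, ball s r) {z₀ z : α} (hz₀ : z₀ ∈ C) (hz : z ∈ C) :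
    dist z z₀ ≤ 2 * r * S.card := by
  -- The distances to `z₀` fill `[0, dist z z₀]`, which is covered by `#S` intervals of length `2r`.
  have hIcc : Icc 0 (dist z z₀) ⊆ (dist · z₀) '' C :=
    (hC.image _ (continuous_id.dist continuous_const).continuousOn).ordConnected.out
      ⟨z₀, hz₀, dist_self z₀⟩ ⟨z, hz, rfl⟩
  have hcover : (dist · z₀) '' C ⊆ ⋃ s ∈ S, Ioo (dist s z₀ - r) (dist s z₀ + r) := by
    rintro _ ⟨w, hw, rfl⟩
    obtain ⟨s, hs, hws⟩ := mem_iUnion₂.mp (hCS hw)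
    have := (abs_dist_sub_le w s z₀).trans_lt hws
    exact mem_iUnion₂.mpr ⟨s, hs, by rw [abs_sub_lt_iff] at this; constructor <;> linarith⟩
  rw [← ENNReal.ofReal_le_ofReal_iff (by positivity)]
  calc ENNReal.ofReal (dist z z₀) = volume (Icc 0 (dist z z₀)) := by rw [Real.volume_Icc, sub_zero]
    _ ≤ ∑ s ∈ S, volume (Ioo (dist s z₀ - r) (dist s z₀ + r)) :=
        (measure_mono (hIcc.trans hcover)).trans (measure_biUnion_finset_le _ _)
    _ = ∑ s ∈ S, ENNReal.ofReal (2 * r) := by simp only [Real.volume_Ioo]; ring_nf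
    _ = ENNReal.ofReal (2 * r * S.card) := by
        rw [Finset.sum_const, nsmul_eq_mul, ENNReal.ofReal_mul' (Nat.cast_nonneg _),
          ENNReal.ofReal_natCast, mul_comm]

theorem IsPreconnected.dist_le_of_norm_eval_lt {K : Type*} [NormedField K] {C : Set K}
    (hC : IsPreconnected C) {p : K[X]} (hm : p.Monic) (hs : p.Splits) {r : ℝ} (hr : 0 ≤ r)
    (hp : ∀ z ∈ C, ‖p.eval z‖ < r ^ p.natDegree) {z₀ z : K} (hz₀ : z₀ ∈ C) (hz : z ∈ C) :
    dist z z₀ ≤ 2 * r * p.natDegree := by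
  classical
  calc dist z z₀ ≤ 2 * r * p.roots.toFinset.card := by
        refine hC.dist_le_of_subset_biUnion_ball hr (fun w hw => ?_) hz₀ hz
        obtain ⟨s, hs, hws⟩ := exists_mem_roots_dist_lt_of_norm_eval_lt hm hs hr (hp w hw)
        exact mem_biUnion (Multiset.mem_toFinset.mpr hs) hws
    _ ≤ 2 * r * p.natDegree := by
        gcongr
        exact (Multiset.toFinset_card_le _).trans (card_roots' p)

theorem Metric.equicontinuousAt_of_exists_eventually_forall_ge {X α : Type*}
    [TopologicalSpace X] [PseudoMetricSpace α] {F : ℕ → X → α} {x₀ : X}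
    (hF : ∀ k, ContinuousAt (F k) x₀)
    (h : ∀ ε > 0, ∃ K, ∀ᶠ x in 𝓝 x₀, ∀ k ≥ K, dist (F k x₀) (F k x) < ε) :
    EquicontinuousAt F x₀ := by
  rw [Metric.equicontinuousAt_iff_right]
  intro ε hε
  obtain ⟨K, hK⟩ := h ε hε
  have hlt : ∀ᶠ x in 𝓝 x₀, ∀ k ∈ Iio K, dist (F k x₀) (F k x) < ε :=
    (eventually_all_finite (finite_Iio K)).mpr fun k _ =>
      (tendsto_nhds.mp (hF k) ε hε).mono fun x hx => by rwa [dist_comm]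
  filter_upwards [hK, hlt] with x hge hlt k
  exact (le_or_gt K k).elim (hge k) (hlt k)

theorem exists_eventually_dist_lt_of_norm_eval_lt {X : Type*} [TopologicalSpace X]
    [LocallyConnectedSpace X] {P : X → ℂ[X]} (hP : ∀ x, (P x).Monic)
    (hPc : Continuous fun q : X × ℂ => (P q.1).eval q.2) {K : Set ℂ} (hK : IsCompact K)
    (x₀ : X) {δ : ℝ} (hδ : 0 < δ) :
    ∃ η > 0, ∀ᶠ x in 𝓝 x₀, ∀ f : C(X, ℂ), (∀ y, f y ∈ K) →
      (∀ y, ‖(P y).eval (f y)‖ < η) → dist (f x₀) (f x) < δ := by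
  set d := (P x₀).natDegree
  set r := δ / (2 * d + 1)
  have hr : 0 < r := by positivity
  have hrd : 2 * r * d < δ := by
    have : r * (2 * d + 1) = δ := div_mul_cancel₀ _ (by positivity)
    nlinarith
  refine ⟨r ^ d / 2, by positivity, ?_⟩
  obtain ⟨U, hU, hUK⟩ := hK.mem_uniformity_of_prod (f := fun x z => (P x).eval z)
    hPc.continuousOn (mem_univ x₀) (dist_mem_uniformity (half_pos (pow_pos hr d)))
  rw [nhdsWithin_univ] at hU
  obtain ⟨V, hV, hVconn, hVU⟩ := locallyConnectedSpace_iff_connected_subsets.mp ‹_› x₀ U hU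
  filter_upwards [hV] with x hx f hfK hf
  have hnear : ∀ z ∈ f '' V, ‖(P x₀).eval z‖ < r ^ d := by
    rintro _ ⟨y, hy, rfl⟩
    calc ‖(P x₀).eval (f y)‖
        ≤ ‖(P y).eval (f y)‖ + ‖(P y).eval (f y) - (P x₀).eval (f y)‖ :=
          norm_le_norm_add_norm_sub _ _
      _ < r ^ d / 2 + r ^ d / 2 :=
          add_lt_add (hf y) (by rw [← dist_eq_norm]; exact hUK y (hVU hy) (f y) (hfK y))
      _ = r ^ d := add_halves _
  rw [dist_comm]
  exact ((hVconn.image f f.continuous.continuousOn).dist_le_of_norm_eval_lt (hP x₀)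
    (IsAlgClosed.splits _) hr.le hnear (mem_image_of_mem f (mem_of_mem_nhds hV))
    (mem_image_of_mem f hx)).trans_lt hrd

theorem norm_le_of_norm_pow_add_sum_lt_one {K : Type*} [NormedField K] {n : ℕ} (hn : 0 < n)
    (c : Fin n → K) {z : K} (hz : ‖z ^ n + ∑ i, c i * z ^ (i : ℕ)‖ < 1) :
    ‖z‖ ≤ 1 + ∑ i, ‖c i‖ := by
  by_contra! h
  set A := ∑ i, ‖c i‖
  have hA : 0 ≤ A := Finset.sum_nonneg fun i _ => norm_nonneg _
  have ht : 1 ≤ ‖z‖ := by linarith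
  have hsum : ‖∑ i, c i * z ^ (i : ℕ)‖ ≤ A * ‖z‖ ^ (n - 1) :=
    calc ‖∑ i, c i * z ^ (i : ℕ)‖ ≤ ∑ i, ‖c i‖ * ‖z‖ ^ (n - 1) := by
          refine (norm_sum_le _ _).trans (Finset.sum_le_sum fun i _ => ?_)
          rw [norm_mul, norm_pow]
          gcongr
          omega
      _ = A * ‖z‖ ^ (n - 1) := (Finset.sum_mul _ _ _).symm
  have hpow : ‖z ^ n‖ = ‖z‖ ^ (n - 1) * ‖z‖ := by rw [norm_pow, pow_sub_one_mul hn.ne']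
  have htri := norm_sub_le (z ^ n + ∑ i, c i * z ^ (i : ℕ)) (∑ i, c i * z ^ (i : ℕ))
  rw [add_sub_cancel_right, hpow] at htri
  nlinarith [one_le_pow₀ (n := n - 1) ht]

theorem Equicontinuous.exists_continuous_tendsto {ι X α : Type*} [TopologicalSpace X]
    [UniformSpace α] {F : ι → X → α} (hF : Equicontinuous F) {K : X → Set α}
    (hK : ∀ x, IsCompact (K x)) (hFK : ∀ i x, F i x ∈ K x) (l : Ultrafilter ι) :
    ∃ g : C(X, α), Tendsto F l (𝓝 g) := by
  obtain ⟨g, -, hg⟩ := (isCompact_univ_pi hK).ultrafilter_le_nhds (l.map F)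
    (le_principal_iff.mpr (mem_map.mpr (univ_mem' fun i => mem_univ_pi.mpr (hFK i))))
  exact ⟨⟨g, Tendsto.continuous_of_equicontinuous hg hF⟩, hg⟩

theorem stmt5_general {X : Type*} [TopologicalSpace X] [CompactSpace X]
    [LocallyConnectedSpace X]
    (n : ℕ) (hn : 0 < n) (a : Fin n → C(X, ℂ))
    (happrox : ∀ ε > 0, ∃ f : C(X, ℂ),
      ∀ x : X, ‖(f x) ^ n + ∑ i : Fin n, a i x * (f x) ^ (i : ℕ)‖ < ε) :
    ∃ f : C(X, ℂ), ∀ x : X, (f x) ^ n + ∑ i : Fin n, a i x * (f x) ^ (i : ℕ) = 0 := by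
  set P : X → ℂ[X] := fun x =>
    Polynomial.X ^ n + ∑ i : Fin n, C (a i x) * Polynomial.X ^ (i : ℕ)
  have hPm : ∀ x, (P x).Monic := fun x => monic_X_pow_add (degree_sum_fin_lt _)
  have hPeval : ∀ x z, (P x).eval z = z ^ n + ∑ i : Fin n, a i x * z ^ (i : ℕ) := by
    simp [P, eval_finsetSum]
  have hPc : Continuous fun q : X × ℂ => (P q.1).eval q.2 := by simp only [hPeval]; fun_prop
  choose f hf using fun k : ℕ => happrox (1 / (k + 1)) Nat.one_div_pos_of_nat
  have hfM : ∀ k x, f k x ∈ closedBall (0 : ℂ) (1 + ∑ i, ‖a i‖) := fun k x => by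
    rw [mem_closedBall_zero_iff]
    refine (norm_le_of_norm_pow_add_sum_lt_one hn (a · x) ?_).trans ?_
    · exact (hf k x).trans_le (by simpa using Nat.one_div_le_one_div (α := ℝ) k.zero_le)
    · gcongr with i
      exact (a i).norm_coe_le_norm x
  simp only [← hPeval] at hf ⊢
  have hequi : Equicontinuous fun k => ⇑(f k) := fun x₀ =>
    Metric.equicontinuousAt_of_exists_eventually_forall_ge (fun k => (f k).continuous.continuousAt)
      fun δ hδ => by
        obtain ⟨η, hη, hev⟩ := exists_eventually_dist_lt_of_norm_eval_lt
          hPm hPc (isCompact_closedBall 0 _) x₀ hδ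
        obtain ⟨K, hK⟩ := exists_nat_one_div_lt hη
        exact ⟨K, hev.mono fun x hx k hk => hx (f k) (hfM k) fun y =>
          ((hf k y).trans_le (Nat.one_div_le_one_div hk)).trans hK⟩
  obtain ⟨g, hg⟩ := hequi.exists_continuous_tendsto (fun _ => isCompact_closedBall 0 _) hfM
    (Ultrafilter.of atTop)
  refine ⟨g, fun x => tendsto_nhds_unique
    (((P x).continuous.tendsto (g x)).comp (tendsto_pi_nhds.mp hg x)) ?_⟩
  exact (squeeze_zero_norm (fun k => (hf k x).le) tendsto_one_div_add_atTop_nhds_zero_nat).mono_left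
    (Ultrafilter.of_le atTop)

/-- Stability over locally connected compacta: if `X` is compact Hausdorff and
locally connected and the monic polynomial `P(x,z) = z^n + ∑ aᵢ(x) zⁱ` over
`C(X)` has `ε`-approximate roots for every `ε > 0`, then it has an exact
continuous root. -/
theorem stmt5 {X : Type*} [TopologicalSpace X] [CompactSpace X] [T2Space X]
    [LocallyConnectedSpace X]
    (n : ℕ) (hn : 0 < n) (a : Fin n → C(X, ℂ))
    (happrox : ∀ ε > 0, ∃ f : C(X, ℂ),
      ∀ x : X, ‖(f x) ^ n + ∑ i : Fin n, a i x * (f x) ^ (i : ℕ)‖ < ε) :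
    ∃ f : C(X, ℂ), ∀ x : X, (f x) ^ n + ∑ i : Fin n, a i x * (f x) ^ (i : ℕ) = 0 :=
  stmt5_general n hn a happrox
end

section
/- Let X be a compact Hausdorff space and P(x,z) = z^n + a_{n-1}(x)z^{n-1} + ... + a_0(x) a monic polynomial over C(X) with M = max_i ‖a_i‖_∞. Set C = ((2+M)^n − 1)/(1+M) + 1. Then for every ε ∈ (0,1] and every monic polynomial Q(x,z) = z^n + b_{n-1}(x)z^{n-1} + ... + b_0(x) over C(X) with ‖a_k − b_k‖_∞ < ε for all k, every ε-approximate root of Q is a Cε-approximate root of P. -/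
/-- Perturbation of coefficients: with `M = maxᵢ ‖aᵢ‖` and
`C = ((2+M)ⁿ - 1)/(1+M) + 1`, for every `ε ∈ (0,1]` and every monic `Q` with
coefficients `bₖ` satisfying `‖aₖ - bₖ‖ < ε`, every `ε`-approximate root of `Q`
is a `Cε`-approximate root of `P`. -/
theorem stmt10 {X : Type*} [TopologicalSpace X] [CompactSpace X] [T2Space X]
    (n : ℕ) (hn : 0 < n) (a b : Fin n → C(X, ℂ)) (M C : ℝ)
    (hM : M = Finset.univ.sup' ⟨⟨0, hn⟩, Finset.mem_univ _⟩ (fun i : Fin n => ‖a i‖))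
    (hC : C = ((2 + M) ^ n - 1) / (1 + M) + 1)
    (ε : ℝ) (hε0 : 0 < ε) (hε1 : ε ≤ 1)
    (hab : ∀ k : Fin n, ‖a k - b k‖ < ε)
    (f : C(X, ℂ))
    (hf : ∀ x : X, ‖(f x) ^ n + ∑ i : Fin n, b i x * (f x) ^ (i : ℕ)‖ < ε) :
    ∀ x : X, ‖(f x) ^ n + ∑ i : Fin n, a i x * (f x) ^ (i : ℕ)‖ < C * ε := by
  have hM0 : 0 ≤ M := by
    rw [hM]
    exact le_trans (norm_nonneg (a ⟨0, hn⟩))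
      (Finset.le_sup' (fun i : Fin n => ‖a i‖) (Finset.mem_univ (⟨0, hn⟩ : Fin n)))
  have ha : ∀ i, ‖a i‖ ≤ M := fun i =>
    hM ▸ Finset.le_sup' (fun i : Fin n => ‖a i‖) (Finset.mem_univ i)
  have hb : ∀ i, ‖b i‖ ≤ M + ε := by
    intro i
    have h1 : b i = a i - (a i - b i) := by ring
    calc ‖b i‖ = ‖a i - (a i - b i)‖ := by rw [← h1]
      _ ≤ ‖a i‖ + ‖a i - b i‖ := norm_sub_le _ _
      _ ≤ M + ε := add_le_add (ha i) (hab i).le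
  -- root bound
  have key : ∀ x, ‖f x‖ < 2 + M := by
    intro x
    by_contra h
    push_neg at h
    set r := ‖f x‖ with hr
    have hr1 : 1 ≤ r := by linarith
    have hrpos : (0:ℝ) < r - 1 := by linarith
    have hgs : (∑ i : Fin n, r ^ (i : ℕ)) * (r - 1) = r ^ n - 1 := by
      rw [Fin.sum_univ_eq_sum_range]
      exact geom_sum_mul r n
    have htge : 0 ≤ ∑ i : Fin n, r ^ (i : ℕ) :=
      Finset.sum_nonneg fun i _ => pow_nonneg (by linarith) _
    have hS : ‖∑ i : Fin n, b i x * (f x) ^ (i : ℕ)‖ ≤ (M + ε) * ∑ i : Fin n, r ^ (i : ℕ) := by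
      calc ‖∑ i : Fin n, b i x * (f x) ^ (i : ℕ)‖
          ≤ ∑ i : Fin n, ‖b i x * (f x) ^ (i : ℕ)‖ := norm_sum_le _ _
        _ ≤ ∑ i : Fin n, (M + ε) * r ^ (i : ℕ) := by
            refine Finset.sum_le_sum fun i _ => ?_
            rw [norm_mul, norm_pow]
            exact mul_le_mul_of_nonneg_right
              (le_trans ((b i).norm_coe_le_norm x) (hb i))
              (pow_nonneg (norm_nonneg _) _)
        _ = (M + ε) * ∑ i : Fin n, r ^ (i : ℕ) := by rw [Finset.mul_sum]
    have h1 : r ^ n < ε + (M + ε) * ∑ i : Fin n, r ^ (i : ℕ) := by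
      have h2 : r ^ n = ‖(f x) ^ n‖ := (norm_pow (f x) n).symm
      have h3 : (f x) ^ n = ((f x) ^ n + ∑ i : Fin n, b i x * (f x) ^ (i : ℕ))
          - ∑ i : Fin n, b i x * (f x) ^ (i : ℕ) := by ring
      calc r ^ n = ‖(f x) ^ n‖ := h2
        _ ≤ ‖(f x) ^ n + ∑ i : Fin n, b i x * (f x) ^ (i : ℕ)‖
            + ‖∑ i : Fin n, b i x * (f x) ^ (i : ℕ)‖ := by
            conv_lhs => rw [h3]
            exact norm_sub_le _ _
        _ < ε + (M + ε) * ∑ i : Fin n, r ^ (i : ℕ) :=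
            add_lt_add_of_lt_of_le (hf x) hS
    have hpn : 1 ≤ r ^ n := one_le_pow₀ hr1
    set t := ∑ i : Fin n, r ^ (i : ℕ) with ht
    have hrc : 1 + M ≤ r - 1 := by linarith
    -- (1-ε)(r^n + M) ≥ 0 derivation inside nlinarith
    nlinarith [mul_lt_mul_of_pos_right h1 hrpos, hgs,
      mul_le_mul_of_nonneg_left hrc (by linarith : (0:ℝ) ≤ r ^ n - ε),
      mul_nonneg (sub_nonneg.2 hε1) (by linarith : (0:ℝ) ≤ r ^ n + M)]
  intro x
  have hfx := key x
  have hsum : (∑ i : Fin n, (a i x - b i x) * (f x) ^ (i : ℕ))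
      = (∑ i : Fin n, a i x * (f x) ^ (i : ℕ)) - ∑ i : Fin n, b i x * (f x) ^ (i : ℕ) := by
    rw [← Finset.sum_sub_distrib]
    exact Finset.sum_congr rfl fun i _ => by ring
  have heq : (f x) ^ n + ∑ i : Fin n, a i x * (f x) ^ (i : ℕ)
      = ((f x) ^ n + ∑ i : Fin n, b i x * (f x) ^ (i : ℕ))
        + ∑ i : Fin n, (a i x - b i x) * (f x) ^ (i : ℕ) := by
    rw [hsum]; ring
  have hG : (∑ i : Fin n, (2 + M) ^ (i : ℕ)) = ((2 + M) ^ n - 1) / (1 + M) := by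
    rw [eq_div_iff (by linarith : (1:ℝ) + M ≠ 0)]
    rw [Fin.sum_univ_eq_sum_range]
    have := geom_sum_mul (2 + M) n
    linarith [this]
  have hCc : ‖∑ i : Fin n, (a i x - b i x) * (f x) ^ (i : ℕ)‖
      ≤ ε * ∑ i : Fin n, (2 + M) ^ (i : ℕ) := by
    calc ‖∑ i : Fin n, (a i x - b i x) * (f x) ^ (i : ℕ)‖
        ≤ ∑ i : Fin n, ‖(a i x - b i x) * (f x) ^ (i : ℕ)‖ := norm_sum_le _ _
      _ ≤ ∑ i : Fin n, ε * (2 + M) ^ (i : ℕ) := by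
          refine Finset.sum_le_sum fun i _ => ?_
          rw [norm_mul, norm_pow]
          have h1 : ‖a i x - b i x‖ ≤ ε := by
            have := (a i - b i).norm_coe_le_norm x
            simp only [ContinuousMap.sub_apply] at this
            exact le_trans this (hab i).le
          exact mul_le_mul h1 (pow_le_pow_left₀ (norm_nonneg _) hfx.le _)
            (pow_nonneg (norm_nonneg _) _) hε0.le
      _ = ε * ∑ i : Fin n, (2 + M) ^ (i : ℕ) := by rw [Finset.mul_sum]
  calc ‖(f x) ^ n + ∑ i : Fin n, a i x * (f x) ^ (i : ℕ)‖
      ≤ ‖(f x) ^ n + ∑ i : Fin n, b i x * (f x) ^ (i : ℕ)‖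
        + ‖∑ i : Fin n, (a i x - b i x) * (f x) ^ (i : ℕ)‖ := by
        rw [heq]; exact norm_add_le _ _
    _ < ε + ε * ∑ i : Fin n, (2 + M) ^ (i : ℕ) :=
        add_lt_add_of_lt_of_le (hf x) hCc
    _ = C * ε := by rw [hG, hC]; ring
end

section
/- Let U, V ∈ SL_2(ℤ) generate a free subgroup of rank 2 with U, V as free generators. Then the subgroup Im(U − I) + Im(V − I) of ℤ² (the sum of the images of the linear maps U − I and V − I acting on ℤ²) has rank 2. -/
/-!
If the rank were at most 1, any two columns of `A = U - 1` and `B = V - 1` would have vanishing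
determinant. Then `det A = 0`, and `det (1 + A) = 1 + tr A + det A = 1` forces `tr A = 0`, so
`A = -adj A`. The vanishing of the mixed determinants says `adj A * B = 0`, hence `A * B = 0`, and
symmetrically `B * A = 0`. So `U = 1 + A` and `V = 1 + B` commute, which free generators cannot.
-/

open Module

namespace Matrix

theorem det_eq_zero_of_rows_mem_of_finrank_lt {R n : Type*} [CommRing R] [IsDomain R]
    [IsNoetherianRing R] [Fintype n] [DecidableEq n] {S : Submodule R (n → R)}
    (hS : finrank R S < Fintype.card n) {A : Matrix n n R} (hA : ∀ i, A i ∈ S) : A.det = 0 := by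
  by_contra hdet
  have hli : LinearIndependent R (fun i => (⟨A i, hA i⟩ : S)) :=
    .of_comp S.subtype (linearIndependent_rows_of_det_ne_zero hdet)
  exact hS.not_ge hli.fintype_card_le_finrank

variable {R : Type*} [CommRing R]

theorem adjugate_fin_two_eq_trace_smul_sub (A : Matrix (Fin 2) (Fin 2) R) :
    adjugate A = trace A • 1 - A := by
  ext i j
  fin_cases i <;> fin_cases j <;> simp [adjugate_fin_two, trace_fin_two]

theorem det_one_add_fin_two (A : Matrix (Fin 2) (Fin 2) R) :
    det (1 + A) = 1 + trace A + det A := by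
  simp only [det_fin_two, trace_fin_two, add_apply, one_apply_eq, ne_eq, one_apply_ne,
    zero_ne_one, one_ne_zero, not_false_eq_true]
  ring

theorem adjugate_mul_eq_zero_of_det_cols_eq_zero {A B : Matrix (Fin 2) (Fin 2) R}
    (h : ∀ i j, det (of ![Aᵀ i, Bᵀ j]) = 0) : adjugate A * B = 0 := by
  ext i j
  have h0 := h 0 j
  have h1 := h 1 j
  simp only [det_fin_two, of_apply, cons_val_zero, cons_val_one, transpose_apply] at h0 h1
  fin_cases i <;> simp only [adjugate_fin_two, mul_apply, Fin.sum_univ_two, of_apply, cons_val',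
    cons_val_fin_one, cons_val_zero, cons_val_one, neg_mul, zero_apply, Fin.zero_eta, Fin.mk_one]
  · linear_combination -h1
  · linear_combination h0

theorem mul_eq_zero_of_det_one_add_eq_one {A B : Matrix (Fin 2) (Fin 2) R}
    (hA : det (1 + A) = 1) (hAA : det (of ![Aᵀ 0, Aᵀ 1]) = 0)
    (hAB : ∀ i j, det (of ![Aᵀ i, Bᵀ j]) = 0) : A * B = 0 := by
  have hdet : det A = 0 := by
    rw [← det_transpose]
    convert hAA using 2
    ext i j
    fin_cases i <;> rfl
  have htrace : trace A = 0 := by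
    rw [det_one_add_fin_two, hdet] at hA
    linear_combination hA
  have := adjugate_mul_eq_zero_of_det_cols_eq_zero hAB
  rwa [adjugate_fin_two_eq_trace_smul_sub, htrace, zero_smul, zero_sub, neg_mul, neg_eq_zero]
    at this

theorem SpecialLinearGroup.commute_of_range_sub_one_le
    (U V : SpecialLinearGroup (Fin 2) R) {S : Submodule R (Fin 2 → R)}
    (hS : ∀ x ∈ S, ∀ y ∈ S, det (of ![x, y]) = 0)
    (hU : LinearMap.range (mulVecLin (U.val - 1)) ≤ S)
    (hV : LinearMap.range (mulVecLin (V.val - 1)) ≤ S) : Commute U V := by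
  set A := U.val - 1
  set B := V.val - 1
  have col_mem {M : Matrix (Fin 2) (Fin 2) R} (hM : LinearMap.range (mulVecLin M) ≤ S) (j) :
      Mᵀ j ∈ S :=
    hM ⟨Pi.single j 1, mulVec_single_one M j⟩
  have hAB : A * B = 0 := mul_eq_zero_of_det_one_add_eq_one (by simp [A])
    (hS _ (col_mem hU 0) _ (col_mem hU 1)) fun i j => hS _ (col_mem hU i) _ (col_mem hV j)
  have hBA : B * A = 0 := mul_eq_zero_of_det_one_add_eq_one (by simp [B])
    (hS _ (col_mem hV 0) _ (col_mem hV 1)) fun i j => hS _ (col_mem hV i) _ (col_mem hU j)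
  refine Subtype.ext ?_
  calc U.val * V.val = (1 + A) * (1 + B) := by simp [A, B]
    _ = (1 + B) * (1 + A) := by noncomm_ring [hAB, hBA]
    _ = V.val * U.val := by simp [A, B]

end Matrix

theorem FreeGroup.not_commute_of_lift_injective {G : Type*} [Group G] {x y : G}
    (h : Function.Injective (FreeGroup.lift fun b : Bool => if b then x else y)) :
    ¬ Commute x y := by
  intro hxy
  have : FreeGroup.of true * FreeGroup.of false = FreeGroup.of false * FreeGroup.of true :=
    h (by simpa using hxy.eq)
  exact absurd this (by decide)

open Matrix

/-- If `U, V ∈ SL₂(ℤ)` freely generate a free subgroup of rank 2, then the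
subgroup `Im(U - I) + Im(V - I)` of `ℤ²` has rank 2. -/
theorem stmt13 (U V : Matrix.SpecialLinearGroup (Fin 2) ℤ)
    (hfree : Function.Injective (FreeGroup.lift (fun b : Bool => if b then U else V))) :
    Module.finrank ℤ
      ↥(LinearMap.range (Matrix.mulVecLin (U.val - 1)) ⊔
        LinearMap.range (Matrix.mulVecLin (V.val - 1)) : Submodule ℤ (Fin 2 → ℤ)) = 2 := by
  set S : Submodule ℤ (Fin 2 → ℤ) :=
    LinearMap.range (mulVecLin (U.val - 1)) ⊔ LinearMap.range (mulVecLin (V.val - 1))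
  have hS_le : finrank ℤ S ≤ 2 := by simpa using S.finrank_le
  suffices ¬ finrank ℤ S ≤ 1 by omega
  intro hS
  have hdet (x) (hx : x ∈ S) (y) (hy : y ∈ S) : det (of ![x, y]) = 0 :=
    det_eq_zero_of_rows_mem_of_finrank_lt (S := S) (by simpa using Nat.lt_succ_of_le hS)
      (Fin.forall_fin_two.2 ⟨hx, hy⟩)
  exact FreeGroup.not_commute_of_lift_injective hfree <|
    SpecialLinearGroup.commute_of_range_sub_one_le U V hdet le_sup_left le_sup_right
end

section
/- Let G_• be an inverse system of groups whose abelianization pro-group Ab(G_•) is m-divisible, and let W be a finite solvable group of exponent m. Then every morphism of pro-groups φ : G_• → W is trivial (i.e. represented by a trivial homomorphism at some stage). -/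
/-!
A homomorphism `φ : G_α → W` into a group of exponent `m` induces `Ab(G_α) → Ab(W)`, and `Ab(W)`
has exponent `m`. By `m`-divisibility the image of `G_β` in `Ab(G_α)` consists of `m`-th powers,
so it is killed, i.e. `φ ∘ p` lands in `[W, W]` from stage `β` on. Applying the same argument to
the corestriction to a term `W^{(n)}` of the derived series pushes the image into `W^{(n+1)}` at a
later stage, and solvability ends this at the trivial group.
-/

theorem Abelianization.pow_eq_one_of_forall_pow_eq_one {W : Type*} [Group W] {m : ℕ}
    (hexp : ∀ w : W, w ^ m = 1) (x : Abelianization W) : x ^ m = 1 :=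
  QuotientGroup.induction_on x fun w => by
    change Abelianization.of w ^ m = 1
    rw [← map_pow, hexp, map_one]

section ProGroup

variable {A : Type*} [Preorder A] {G : A → Type*} [∀ a, Group (G a)]
  (p : ∀ ⦃a b : A⦄, a ≤ b → (G b →* G a)) {m : ℕ}
  (hdiv : ∀ a : A, ∃ (b : A) (hab : a ≤ b), ∀ h : G b,
    ∃ g : Abelianization (G a), g ^ m = Abelianization.of (p hab h))
  {W : Type*} [Group W] (hexp : ∀ w : W, w ^ m = 1)
include hdiv hexp

theorem exists_forall_map_mem_commutator (a : A) (φ : G a →* W) :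
    ∃ (b : A) (hab : a ≤ b), ∀ h : G b, φ (p hab h) ∈ commutator W := by
  obtain ⟨b, hab, hb⟩ := hdiv a
  refine ⟨b, hab, fun h => ?_⟩
  obtain ⟨g, hg⟩ := hb h
  rw [← Abelianization.ker_of, MonoidHom.mem_ker, ← Abelianization.map_of, ← hg, map_pow]
  exact Abelianization.pow_eq_one_of_forall_pow_eq_one hexp _

theorem exists_forall_map_mem_commutator_of_forall_mem {H : Subgroup W} {a : A}
    (φ : G a →* W) (hφ : ∀ g, φ g ∈ H) :
    ∃ (b : A) (hab : a ≤ b), ∀ h : G b, φ (p hab h) ∈ ⁅H, H⁆ := by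
  have hexpH (w : H) : w ^ m = 1 := Subtype.ext (by simpa using hexp w)
  obtain ⟨b, hab, hb⟩ :=
    exists_forall_map_mem_commutator p hdiv hexpH a (φ.codRestrict H hφ)
  exact ⟨b, hab, fun h => H.map_subtype_commutator ▸ Subgroup.mem_map_of_mem H.subtype (hb h)⟩

theorem exists_forall_map_mem_derivedSeries
    (hp_comp : ∀ ⦃a b c : A⦄ (hab : a ≤ b) (hbc : b ≤ c),
      (p hab).comp (p hbc) = p (hab.trans hbc))
    (n : ℕ) (a : A) (φ : G a →* W) :
    ∃ (b : A) (hab : a ≤ b), ∀ h : G b, φ (p hab h) ∈ derivedSeries W n := by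
  induction n with
  | zero => exact ⟨a, le_rfl, fun _ => Subgroup.mem_top _⟩
  | succ n ih =>
    obtain ⟨b, hab, hb⟩ := ih
    obtain ⟨c, hbc, hc⟩ :=
      exists_forall_map_mem_commutator_of_forall_mem p hdiv hexp (φ.comp (p hab)) hb
    refine ⟨c, hab.trans hbc, fun h => ?_⟩
    rw [derivedSeries_succ, ← hp_comp hab hbc]
    exact hc h

end ProGroup

theorem stmt16_general {A : Type*} [Preorder A]
    (G : A → Type*) [∀ a, Group (G a)]
    (p : ∀ ⦃a b : A⦄, a ≤ b → (G b →* G a))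
    (hp_comp : ∀ ⦃a b c : A⦄ (hab : a ≤ b) (hbc : b ≤ c),
      (p hab).comp (p hbc) = p (hab.trans hbc))
    (m : ℕ)
    (hdiv : ∀ a : A, ∃ (b : A) (hab : a ≤ b), ∀ h : G b,
      ∃ g : Abelianization (G a), g ^ m = Abelianization.of (p hab h))
    (W : Type*) [Group W] [Group.IsSolvable W]
    (hexp : ∀ w : W, w ^ m = 1) :
    ∀ (a : A) (φ : G a →* W), ∃ (b : A) (hab : a ≤ b), φ.comp (p hab) = 1 := by
  intro a φ
  obtain ⟨n, hn⟩ := Group.IsSolvable.solvable (G := W)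
  obtain ⟨b, hab, hb⟩ := exists_forall_map_mem_derivedSeries p hdiv hexp hp_comp n a φ
  exact ⟨b, hab, MonoidHom.ext fun h => by simpa [hn] using hb h⟩

/-- If the abelianization pro-group of an inverse system of groups `(G_α)` is
`m`-divisible (for every `α` there is `β ≥ α` such that every element of the
image of `Ab(G_β)` in `Ab(G_α)` is an `m`-th power), and `W` is a finite
solvable group of exponent `m`, then every morphism of pro-groups `G_• → W` is
trivial, i.e. every representative homomorphism becomes trivial at some later
stage. -/
theorem stmt16 {A : Type*} [Preorder A] [IsDirected A (· ≤ ·)]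
    (G : A → Type*) [∀ a, Group (G a)]
    (p : ∀ ⦃a b : A⦄, a ≤ b → (G b →* G a))
    (hp_id : ∀ a : A, p (le_refl a) = MonoidHom.id (G a))
    (hp_comp : ∀ ⦃a b c : A⦄ (hab : a ≤ b) (hbc : b ≤ c),
      (p hab).comp (p hbc) = p (hab.trans hbc))
    (m : ℕ)
    (hdiv : ∀ a : A, ∃ (b : A) (hab : a ≤ b), ∀ h : G b,
      ∃ g : Abelianization (G a), g ^ m = Abelianization.of (p hab h))
    (W : Type*) [Group W] [Finite W] [Group.IsSolvable W]
    (hexp : ∀ w : W, w ^ m = 1) :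
    ∀ (a : A) (φ : G a →* W), ∃ (b : A) (hab : a ≤ b), φ.comp (p hab) = 1 :=
  stmt16_general G p hp_comp m hdiv W hexp
end

section
/- For n ≥ 5, there exists an endomorphism f of the free group F_2 on generators x, y such that: (1) the image of f is contained in the commutator subgroup of F_2, and (2) there is a surjective homomorphism ψ : F_2 → A_n (onto the alternating group) with ψ ∘ f = ψ. -/
/-!
Let `ψ : F₂ → Aₙ` be any surjection. Since `Aₙ` is perfect, `ψ` maps the commutator subgroup
of `F₂` onto `Aₙ`, so each generator `x` of `F₂` has a preimage `x'` of `ψ x` in `[F₂, F₂]`, and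
`f : x ↦ x'` works. Such a `ψ` exists because `Aₙ` is two-generated: `Sₙ` is generated by the
`n`-cycle `σ` and a transposition `t`, and the index-two subgroup `Aₙ` is then generated by
`σ, tσt` (if `σ` is even) or by `tσ, σt` (if `σ` is odd).
-/

open Equiv Equiv.Perm Subgroup

section IndexTwo

variable {G : Type*} [Group G]

theorem mem_or_mul_mem_of_mem_closure_pair {H : Subgroup G} {s t g : G} (ht : t * t = 1)
    (hconj : ∀ h ∈ H, t * h * t ∈ H) (hs : s ∈ H ∨ s * t ∈ H) (hg : g ∈ closure {s, t}) :
    g ∈ H ∨ g * t ∈ H := by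
  have hti : t⁻¹ = t := inv_eq_of_mul_eq_one_right ht
  -- `H ∪ H t` is a subgroup because `t` normalizes `H`.
  let K : Subgroup G :=
    { carrier := {u | u ∈ H ∨ u * t ∈ H}
      one_mem' := Or.inl H.one_mem
      mul_mem' := by
        rintro a b (ha | ha) (hb | hb)
        · exact Or.inl (H.mul_mem ha hb)
        · exact Or.inr (by simpa only [mul_assoc] using H.mul_mem ha hb)
        · refine Or.inr ?_
          simpa only [mul_assoc, ← mul_assoc t t, ht, one_mul] using H.mul_mem ha (hconj b hb)
        · refine Or.inl ?_
          simpa only [mul_assoc, ← mul_assoc t t, ht, one_mul, mul_one]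
            using H.mul_mem ha (hconj _ hb)
      inv_mem' := by
        rintro a (ha | ha)
        · exact Or.inl (H.inv_mem ha)
        · refine Or.inr ?_
          simpa only [mul_inv_rev, hti, mul_assoc, ← mul_assoc t t, ht, one_mul]
            using hconj _ (H.inv_mem ha) }
  have hsK : s ∈ K := hs
  have htK : t ∈ K := Or.inr (ht ▸ H.one_mem)
  exact closure_le K |>.2 (Set.insert_subset hsK (Set.singleton_subset_iff.2 htK)) hg

theorem conj_mem_closure_pair_of_swap {a b t h : G} (ht : t * t = 1) (hab : t * a * t = b)
    (hba : t * b * t = a) (hh : h ∈ closure {a, b}) : t * h * t ∈ closure {a, b} := by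
  have hti : t⁻¹ = t := inv_eq_of_mul_eq_one_right ht
  induction hh using closure_induction with
  | mem x hx =>
    rcases hx with rfl | rfl
    · exact hab ▸ subset_closure (Set.mem_insert_of_mem _ rfl)
    · exact hba ▸ subset_closure (Set.mem_insert _ _)
  | one => simp [ht]
  | mul x y _ _ hx hy =>
    simpa only [mul_assoc, ← mul_assoc t t, ht, one_mul] using mul_mem hx hy
  | inv x _ hx =>
    simpa only [mul_inv_rev, hti, mul_assoc] using inv_mem hx

theorem closure_pair_eq_ker_of_conj_swap {χ : G →* ℤˣ} {s t a b : G}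
    (hgen : closure {s, t} = ⊤) (ht : t * t = 1) (hχt : χ t = -1) (ha : χ a = 1) (hb : χ b = 1)
    (hab : t * a * t = b) (hba : t * b * t = a)
    (hs : s ∈ closure {a, b} ∨ s * t ∈ closure {a, b}) :
    closure {a, b} = χ.ker := by
  have hle : closure {a, b} ≤ χ.ker := closure_le _ |>.2 <| by
    rintro _ (rfl | rfl) <;> assumption
  refine le_antisymm hle fun g hg => ?_
  rcases mem_or_mul_mem_of_mem_closure_pair ht
      (fun _ ↦ conj_mem_closure_pair_of_swap ht hab hba) hs (hgen ▸ mem_top g) with h | h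
  · exact h
  · have := hle h
    rw [MonoidHom.mem_ker, map_mul, hg, hχt] at this
    exact absurd this (by decide)

theorem exists_closure_pair_eq_ker {χ : G →* ℤˣ} {s t : G} (hgen : closure {s, t} = ⊤)
    (ht : t * t = 1) (hχt : χ t = -1) : ∃ a b : G, closure {a, b} = χ.ker := by
  have conj_conj : ∀ u, t * (t * u * t) * t = u := fun u ↦ by
    simp only [mul_assoc, ht, mul_one, ← mul_assoc t t, one_mul]
  rcases Int.units_eq_one_or (χ s) with hχs | hχs
  · exact ⟨s, t * s * t, closure_pair_eq_ker_of_conj_swap hgen ht hχt hχs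
      (by simp [hχs, hχt]) rfl (conj_conj s) (Or.inl (subset_closure (Set.mem_insert _ _)))⟩
  · exact ⟨t * s, s * t, closure_pair_eq_ker_of_conj_swap hgen ht hχt
      (by simp [hχs, hχt]) (by simp [hχs, hχt]) (by simp only [← mul_assoc t t, ht, one_mul])
      (by simp only [mul_assoc, ht, mul_one])
      (Or.inr (subset_closure (Set.mem_insert_of_mem _ rfl)))⟩

end IndexTwo

theorem exists_closure_pair_eq_alternatingGroup {n : ℕ} (hn : 2 ≤ n) :
    ∃ a b : Perm (Fin n), closure {a, b} = alternatingGroup (Fin n) := by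
  let x : Fin n := ⟨0, by omega⟩
  have hsupp := support_finRotate_of_le hn
  have hx : finRotate n x ≠ x := mem_support.1 (hsupp ▸ Finset.mem_univ x)
  exact exists_closure_pair_eq_ker
    (closure_cycle_adjacent_swap (isCycle_finRotate_of_le hn) hsupp x) (swap_mul_self _ _)
    (sign_swap hx.symm)

theorem Subgroup.exists_surjective_freeGroup_of_closure_range_eq {G ι : Type*} [Group G]
    {H : Subgroup G} (g : ι → G) (hg : closure (Set.range g) = H) :
    ∃ ψ : FreeGroup ι →* H, Function.Surjective ψ := by
  have hgH : ∀ i, g i ∈ H := fun i ↦ hg ▸ subset_closure ⟨i, rfl⟩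
  refine ⟨FreeGroup.lift fun i ↦ ⟨g i, hgH i⟩, ?_⟩
  have hlift : H.subtype.comp (FreeGroup.lift fun i ↦ ⟨g i, hgH i⟩) = FreeGroup.lift g :=
    FreeGroup.ext_hom _ _ fun i ↦ by simp
  rw [← MonoidHom.range_eq_top, ← (map_injective H.subtype_injective).eq_iff,
    ← MonoidHom.range_eq_map, ← MonoidHom.range_comp, hlift, FreeGroup.range_lift_eq_closure, hg,
    range_subtype]

theorem alternatingGroup.exists_surjective_freeGroup_bool {n : ℕ} (hn : 2 ≤ n) :
    ∃ ψ : FreeGroup Bool →* alternatingGroup (Fin n), Function.Surjective ψ := by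
  obtain ⟨a, b, hab⟩ := exists_closure_pair_eq_alternatingGroup hn
  exact exists_surjective_freeGroup_of_closure_range_eq (fun i ↦ cond i a b) (by
    rw [← hab]; congr 1; ext; simp [or_comm, eq_comm])

theorem FreeGroup.exists_endomorphism_commutator_of_perfect {ι G : Type*} [Group G]
    (hG : commutator G = ⊤) (ψ : FreeGroup ι →* G) (hψ : Function.Surjective ψ) :
    ∃ f : FreeGroup ι →* FreeGroup ι,
      (∀ w, f w ∈ commutator (FreeGroup ι)) ∧ ψ.comp f = ψ := by
  have hmap : (commutator (FreeGroup ι)).map ψ = ⊤ := by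
    rw [commutator_def, map_commutator, map_top_of_surjective ψ hψ, ← commutator_def, hG]
  choose c hc hψc using fun i ↦ hmap.ge (mem_top (ψ (of i)))
  exact ⟨lift c, fun w ↦ range_lift_le (Set.range_subset_iff.2 hc) ⟨w, rfl⟩,
    ext_hom _ _ fun i ↦ by simp [hψc]⟩

/-- For `n ≥ 5` there is an endomorphism `f` of the free group `F₂` on two
generators whose image lies in the commutator subgroup of `F₂`, together with a
surjection `ψ : F₂ → Aₙ` onto the alternating group satisfying `ψ ∘ f = ψ`. -/
theorem stmt17 (n : ℕ) (hn : 5 ≤ n) :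
    ∃ f : FreeGroup Bool →* FreeGroup Bool,
      (∀ w : FreeGroup Bool, f w ∈ commutator (FreeGroup Bool)) ∧
      ∃ ψ : FreeGroup Bool →* alternatingGroup (Fin n),
        Function.Surjective ψ ∧ ψ.comp f = ψ := by
  obtain ⟨ψ, hψ⟩ := alternatingGroup.exists_surjective_freeGroup_bool (n := n) (by omega)
  obtain ⟨f, hf, hψf⟩ := FreeGroup.exists_endomorphism_commutator_of_perfect
    (commutator_alternatingGroup_eq_top (by simpa using hn)) ψ hψ
  exact ⟨f, hf, ψ, hψ, hψf⟩
end
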